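/- Let $\gamma > -1$ and define $\sigma_{n,k}^2 = \frac{4\pi\,4^{\gamma+1}}{n+1} \cdot \frac{B(n-k+1+\gamma,\, k+1+\gamma)}{B(n-k+1,\, k+1)}$ for $n \ge 0$ and $0 \le k \le n$. Then there exist constants $C_1, C_2 > 0$ depending only on $\gamma$ such that $C_1 (n+1)^{\min(-1, -1-\gamma)} \le \sigma_{n,k}^2 \le C_2 (n+1)^{\max(-1, -1-\gamma)}$ for all $n \ge 0$ and $0 \le k \le n$. -/
import Mathlib

open Real


lemma gautschi_upper {u r : ℝ} (hu : 0 < u) (h0 : 0 ≤ r) (h1 : r ≤ 1) :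
    Gamma (u + r) ≤ Gamma u * u ^ r := by
  have hGu : 0 < Gamma u := Gamma_pos_of_pos hu
  rcases h0.eq_or_lt with h | h0'
  · simp [← h, rpow_zero]
  rcases h1.eq_or_lt with h | h1'
  · rw [h, Gamma_add_one hu.ne', rpow_one]; ring_nf; rfl
  have key := Gamma_mul_add_mul_le_rpow_Gamma_mul_rpow_Gamma hu (by linarith : (0:ℝ) < u + 1)
    (by linarith : (0:ℝ) < 1 - r) h0' (by ring)
  have harg : (1 - r) * u + r * (u + 1) = u + r := by ring
  rw [harg] at key
  calc Gamma (u + r) ≤ Gamma u ^ (1 - r) * Gamma (u + 1) ^ r := key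
    _ = Gamma u * u ^ r := by
        rw [Gamma_add_one hu.ne', mul_rpow hu.le hGu.le, ← mul_assoc, mul_comm (Gamma u ^ (1-r)),
          mul_assoc, ← rpow_add hGu]
        norm_num [mul_comm]

lemma gautschi_lower {u r : ℝ} (hu : 0 < u) (h0 : 0 ≤ r) (h1 : r ≤ 1) :
    Gamma u * u ≤ Gamma (u + r) * (u + r) ^ (1 - r) := by
  have hGu : 0 < Gamma u := Gamma_pos_of_pos hu
  have hur : 0 < u + r := by linarith
  rcases h0.eq_or_lt with h | h0'
  · rw [← h]
    simp only [add_zero, sub_zero, rpow_one]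
    nlinarith [Gamma_pos_of_pos hu]
  rcases h1.eq_or_lt with h | h1'
  · rw [h]
    simp
    rw [mul_comm, ← Gamma_add_one hu.ne']
  have key := Gamma_mul_add_mul_le_rpow_Gamma_mul_rpow_Gamma hur
    (by linarith : (0:ℝ) < u + r + 1) h0' (by linarith : (0:ℝ) < 1 - r) (by ring)
  have harg : r * (u + r) + (1 - r) * (u + r + 1) = u + 1 := by ring
  rw [harg] at key
  have hGur : 0 < Gamma (u + r) := Gamma_pos_of_pos hur
  calc Gamma u * u = Gamma (u + 1) := by rw [Gamma_add_one hu.ne']; ring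
    _ ≤ Gamma (u + r) ^ r * Gamma (u + r + 1) ^ (1 - r) := key
    _ = Gamma (u + r) * (u + r) ^ (1 - r) := by
        rw [Gamma_add_one hur.ne', mul_rpow hur.le hGur.le, mul_comm ((u+r) ^ (1-r)),
          ← mul_assoc, ← rpow_add hGur]
        norm_num [mul_comm]

lemma gr_aux : ∀ (n : ℕ) (γ : ℝ), -1 < γ → γ ≤ (n : ℝ) →
    ∃ c₁ c₂ : ℝ, 0 < c₁ ∧ 0 < c₂ ∧ ∀ x : ℝ, 1 ≤ x →
      c₁ * (x ^ γ * Gamma x) ≤ Gamma (x + γ) ∧ Gamma (x + γ) ≤ c₂ * (x ^ γ * Gamma x) := by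
  have base1 : ∀ γ : ℝ, -1 < γ → γ ≤ 0 → ∃ c₁ c₂ : ℝ, 0 < c₁ ∧ 0 < c₂ ∧ ∀ x : ℝ, 1 ≤ x →
      c₁ * (x ^ γ * Gamma x) ≤ Gamma (x + γ) ∧ Gamma (x + γ) ≤ c₂ * (x ^ γ * Gamma x) := by
    intro γ h1 h2
    have h1γ : 0 < 1 + γ := by linarith
    refine ⟨1, 1 / (1 + γ), one_pos, by positivity, fun x hx => ?_⟩
    have hx0 : (0:ℝ) < x := by linarith
    have hu : 0 < x + γ := by linarith
    have hGx : 0 < Gamma x := Gamma_pos_of_pos hx0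
    have hGu : 0 < Gamma (x + γ) := Gamma_pos_of_pos hu
    constructor
    · have h3 := gautschi_upper (u := x + γ) (r := -γ) hu (by linarith) (by linarith)
      rw [show x + γ + -γ = x by ring] at h3
      have h4 : x ^ γ ≤ (x + γ) ^ γ :=
        rpow_le_rpow_of_nonpos hu (by linarith) h2
      calc 1 * (x ^ γ * Gamma x) = x ^ γ * Gamma x := one_mul _
        _ ≤ (x + γ) ^ γ * (Gamma (x + γ) * (x + γ) ^ (-γ)) := by
            apply mul_le_mul h4 h3 hGx.le (by positivity)
        _ = Gamma (x + γ) * ((x + γ) ^ γ * (x + γ) ^ (-γ)) := by ring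
        _ = Gamma (x + γ) := by rw [← rpow_add hu]; simp
    · have h3 := gautschi_lower (u := x + γ) (r := -γ) hu (by linarith) (by linarith)
      rw [show x + γ + -γ = x by ring, show 1 - -γ = γ + 1 by ring,
        rpow_add_one hx0.ne'] at h3
      have h5 : (1 + γ) * x ≤ x + γ := by nlinarith
      have h6 : Gamma (x + γ) * ((1 + γ) * x) ≤ (x ^ γ * Gamma x) * x := by
        calc Gamma (x + γ) * ((1 + γ) * x) ≤ Gamma (x + γ) * (x + γ) := by
              exact mul_le_mul_of_nonneg_left h5 hGu.le
          _ ≤ Gamma x * (x ^ γ * x) := h3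
          _ = (x ^ γ * Gamma x) * x := by ring
      have h7 : Gamma (x + γ) * (1 + γ) ≤ x ^ γ * Gamma x := by
        have h6' : (Gamma (x + γ) * (1 + γ)) * x ≤ (x ^ γ * Gamma x) * x := by
          nlinarith [h6]
        exact le_of_mul_le_mul_right h6' hx0
      rw [one_div, inv_mul_eq_div]
      exact (le_div_iff₀ h1γ).mpr h7
  have base2 : ∀ γ : ℝ, 0 < γ → γ ≤ 1 → ∃ c₁ c₂ : ℝ, 0 < c₁ ∧ 0 < c₂ ∧ ∀ x : ℝ, 1 ≤ x →
      c₁ * (x ^ γ * Gamma x) ≤ Gamma (x + γ) ∧ Gamma (x + γ) ≤ c₂ * (x ^ γ * Gamma x) := by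
    intro γ h1 h2
    have h1γ : (0:ℝ) < 1 + γ := by linarith
    refine ⟨1 / (1 + γ), 1, by positivity, one_pos, fun x hx => ?_⟩
    have hx0 : (0:ℝ) < x := by linarith
    have hu : 0 < x + γ := by linarith
    have hGx : 0 < Gamma x := Gamma_pos_of_pos hx0
    have hGu : 0 < Gamma (x + γ) := Gamma_pos_of_pos hu
    constructor
    · have h3 := gautschi_lower (u := x) (r := γ) hx0 h1.le h2
      have e1 : x ^ γ * (x + γ) ^ (1 - γ) ≤ (1 + γ) * x := by
        have e2 : (x + γ) ^ (1 - γ) ≤ ((1 + γ) * x) ^ (1 - γ) := by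
          apply rpow_le_rpow hu.le (by nlinarith) (by linarith)
        have e3 : ((1 + γ) * x) ^ (1 - γ) = (1 + γ) ^ (1 - γ) * x ^ (1 - γ) :=
          mul_rpow h1γ.le hx0.le
        have e4 : (1 + γ) ^ (1 - γ) ≤ 1 + γ := by
          calc (1 + γ) ^ (1 - γ) ≤ (1 + γ) ^ (1:ℝ) :=
                rpow_le_rpow_of_exponent_le (by linarith) (by linarith)
            _ = 1 + γ := rpow_one _
        calc x ^ γ * (x + γ) ^ (1 - γ) ≤ x ^ γ * ((1 + γ) ^ (1 - γ) * x ^ (1 - γ)) := by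
              rw [← e3]; exact mul_le_mul_of_nonneg_left e2 (by positivity)
          _ ≤ x ^ γ * ((1 + γ) * x ^ (1 - γ)) := by
              apply mul_le_mul_of_nonneg_left (mul_le_mul_of_nonneg_right e4 (by positivity))
                (by positivity)
          _ = (1 + γ) * (x ^ γ * x ^ (1 - γ)) := by ring
          _ = (1 + γ) * x := by rw [← rpow_add hx0]; norm_num
      have key : (1 / (1 + γ) * (x ^ γ * Gamma x)) * (x + γ) ^ (1 - γ) ≤
          Gamma (x + γ) * (x + γ) ^ (1 - γ) := by
        calc (1 / (1 + γ) * (x ^ γ * Gamma x)) * (x + γ) ^ (1 - γ)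
            = (1 / (1 + γ)) * Gamma x * (x ^ γ * (x + γ) ^ (1 - γ)) := by ring
          _ ≤ (1 / (1 + γ)) * Gamma x * ((1 + γ) * x) := by
              apply mul_le_mul_of_nonneg_left e1 (by positivity)
          _ = Gamma x * x := by field_simp
          _ ≤ Gamma (x + γ) * (x + γ) ^ (1 - γ) := h3
      exact le_of_mul_le_mul_right key (by positivity)
    · have h3 := gautschi_upper (u := x) (r := γ) hx0 h1.le h2
      calc Gamma (x + γ) ≤ Gamma x * x ^ γ := h3
        _ = 1 * (x ^ γ * Gamma x) := by ring
  intro n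
  induction n with
  | zero => intro γ h1 h2; exact base1 γ h1 (by exact_mod_cast h2)
  | succ n ih =>
    intro γ h1 h2
    by_cases hle : γ ≤ (n : ℝ)
    · exact ih γ h1 hle
    push_neg at hle
    have hγ0 : 0 < γ := lt_of_le_of_lt (Nat.cast_nonneg n) hle
    by_cases hle1 : γ ≤ 1
    · exact base2 γ hγ0 hle1
    push_neg at hle1
    obtain ⟨c₁, c₂, hc₁, hc₂, H⟩ := ih (γ - 1) (by linarith) (by push_cast at h2 ⊢; linarith)
    refine ⟨c₁, γ * c₂, hc₁, by positivity, fun x hx => ?_⟩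
    have hx0 : (0:ℝ) < x := by linarith
    have hu : (0:ℝ) < x + (γ - 1) := by linarith
    have hGu : 0 < Gamma (x + (γ - 1)) := Gamma_pos_of_pos hu
    have hGx : 0 < Gamma x := Gamma_pos_of_pos hx0
    obtain ⟨L, U⟩ := H x hx
    have hsplit : Gamma (x + γ) = (x + (γ - 1)) * Gamma (x + (γ - 1)) := by
      rw [show x + γ = (x + (γ - 1)) + 1 by ring, Gamma_add_one hu.ne']
    have hxpow : x ^ γ = x ^ (γ - 1) * x := by
      rw [show γ = (γ - 1) + 1 by ring, rpow_add_one hx0.ne']; ring_nf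
    constructor
    · rw [hsplit, hxpow]
      calc c₁ * (x ^ (γ - 1) * x * Gamma x) = x * (c₁ * (x ^ (γ - 1) * Gamma x)) := by ring
        _ ≤ x * Gamma (x + (γ - 1)) := mul_le_mul_of_nonneg_left L hx0.le
        _ ≤ (x + (γ - 1)) * Gamma (x + (γ - 1)) := by
            apply mul_le_mul_of_nonneg_right (by linarith) hGu.le
    · rw [hsplit, hxpow]
      calc (x + (γ - 1)) * Gamma (x + (γ - 1)) ≤ (γ * x) * Gamma (x + (γ - 1)) := by
            apply mul_le_mul_of_nonneg_right (by nlinarith) hGu.le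
        _ ≤ (γ * x) * (c₂ * (x ^ (γ - 1) * Gamma x)) := by
            apply mul_le_mul_of_nonneg_left U (by positivity)
        _ = γ * c₂ * (x ^ (γ - 1) * x * Gamma x) := by ring

lemma gr (γ : ℝ) (hγ : -1 < γ) :
    ∃ c₁ c₂ : ℝ, 0 < c₁ ∧ 0 < c₂ ∧ ∀ x : ℝ, 1 ≤ x →
      c₁ * (x ^ γ * Gamma x) ≤ Gamma (x + γ) ∧ Gamma (x + γ) ≤ c₂ * (x ^ γ * Gamma x) :=
  gr_aux ⌈γ⌉₊ γ hγ (Nat.le_ceil γ)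

lemma rpow_between {A B v e : ℝ} (hA : 0 < A) (hAv : A ≤ v) (hvB : v ≤ B) :
    min (A ^ e) (B ^ e) ≤ v ^ e ∧ v ^ e ≤ max (A ^ e) (B ^ e) := by
  rcases le_or_gt 0 e with he | he
  · exact ⟨(min_le_left _ _).trans (rpow_le_rpow hA.le hAv he),
      (rpow_le_rpow (hA.trans_le hAv).le hvB he).trans (le_max_right _ _)⟩
  · exact ⟨(min_le_right _ _).trans (rpow_le_rpow_of_nonpos (hA.trans_le hAv) hvB he.le),
      (rpow_le_rpow_of_nonpos hA hAv he.le).trans (le_max_left _ _)⟩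

lemma gr2 (γ : ℝ) (hγ : -1 < γ) :
    ∃ d₁ d₂ : ℝ, 0 < d₁ ∧ 0 < d₂ ∧ ∀ x : ℝ, 2 ≤ x →
      d₁ * (x ^ (2*γ) * Gamma x) ≤ Gamma (x + 2*γ) ∧
      Gamma (x + 2*γ) ≤ d₂ * (x ^ (2*γ) * Gamma x) := by
  obtain ⟨c₁, c₂, hc₁, hc₂, H⟩ := gr γ hγ
  set ρ₁ : ℝ := min 1 (1 + γ/2) with hρ₁def
  set ρ₂ : ℝ := max 1 (1 + γ/2) with hρ₂def
  have hρ₁ : 0 < ρ₁ := lt_min one_pos (by linarith)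
  have hρ₂ : 0 < ρ₂ := lt_of_lt_of_le hρ₁ (min_le_max)
  set m₁ : ℝ := min (ρ₁ ^ γ) (ρ₂ ^ γ) with hm₁def
  set m₂ : ℝ := max (ρ₁ ^ γ) (ρ₂ ^ γ) with hm₂def
  have hm₁ : 0 < m₁ := lt_min (rpow_pos_of_pos hρ₁ γ) (rpow_pos_of_pos hρ₂ γ)
  have hm₂ : 0 < m₂ := lt_of_lt_of_le hm₁ min_le_max
  refine ⟨c₁ * c₁ * m₁, c₂ * c₂ * m₂, by positivity, by positivity, fun x hx => ?_⟩
  have hx1 : (1:ℝ) ≤ x := by linarith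
  have hx0 : (0:ℝ) < x := by linarith
  have hxγ1 : (1:ℝ) ≤ x + γ := by nlinarith
  have hxγ0 : (0:ℝ) < x + γ := by linarith
  have hGx : 0 < Gamma x := Gamma_pos_of_pos hx0
  have hGxγ : 0 < Gamma (x + γ) := Gamma_pos_of_pos hxγ0
  -- ρ₁ x ≤ x + γ ≤ ρ₂ x
  have hlo : ρ₁ * x ≤ x + γ := by
    rcases le_or_gt 0 γ with h | h
    · have : ρ₁ ≤ 1 := min_le_left _ _
      nlinarith
    · have : ρ₁ ≤ 1 + γ/2 := min_le_right _ _
      nlinarith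
  have hhi : x + γ ≤ ρ₂ * x := by
    rcases le_or_gt 0 γ with h | h
    · have : 1 + γ/2 ≤ ρ₂ := le_max_right _ _
      nlinarith
    · have : 1 ≤ ρ₂ := le_max_left _ _
      nlinarith
  have hbet := rpow_between (e := γ) (by positivity : 0 < ρ₁ * x) hlo hhi
  rw [mul_rpow hρ₁.le hx0.le, mul_rpow hρ₂.le hx0.le, ← min_mul_of_nonneg _ _ (by positivity),
    ← max_mul_of_nonneg _ _ (by positivity)] at hbet
  obtain ⟨hbet1, hbet2⟩ := hbet
  obtain ⟨A1, A2⟩ := H x hx1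
  obtain ⟨E1, E2⟩ := H (x + γ) hxγ1
  have hsplit : x + 2*γ = (x + γ) + γ := by ring
  have hpow : x ^ (2*γ) = x ^ γ * x ^ γ := by rw [← rpow_add hx0]; ring_nf
  rw [hsplit, hpow]
  constructor
  · calc c₁ * c₁ * m₁ * (x ^ γ * x ^ γ * Gamma x)
        = c₁ * ((m₁ * x ^ γ) * (c₁ * (x ^ γ * Gamma x))) := by ring
      _ ≤ c₁ * ((x + γ) ^ γ * Gamma (x + γ)) := by
          apply mul_le_mul_of_nonneg_left _ hc₁.le
          apply mul_le_mul hbet1 A1 (by positivity) (by positivity)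
      _ ≤ Gamma (x + γ + γ) := E1
  · calc Gamma (x + γ + γ) ≤ c₂ * ((x + γ) ^ γ * Gamma (x + γ)) := E2
      _ ≤ c₂ * ((m₂ * x ^ γ) * (c₂ * (x ^ γ * Gamma x))) := by
          apply mul_le_mul_of_nonneg_left _ hc₂.le
          apply mul_le_mul hbet2 A2 (by positivity) (by positivity)
      _ = c₂ * c₂ * m₂ * (x ^ γ * x ^ γ * Gamma x) := by ring

/-- The real Beta function `B(x,y) = Γ(x)Γ(y)/Γ(x+y)`. -/
noncomputable def realBeta (x y : ℝ) : ℝ := Real.Gamma x * Real.Gamma y / Real.Gamma (x + y)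

/-- Squared singular values of the weighted X-ray transform `I₀ d^γ` on the disk. -/
noncomputable def sigmaSq (γ : ℝ) (n k : ℕ) : ℝ :=
  4 * Real.pi * (4 : ℝ) ^ (γ + 1) / ((n : ℝ) + 1) *
    (realBeta ((n : ℝ) - (k : ℝ) + 1 + γ) ((k : ℝ) + 1 + γ) /
      realBeta ((n : ℝ) - (k : ℝ) + 1) ((k : ℝ) + 1))

set_option maxHeartbeats 1000000 in
/-- Two-sided power-law bounds for the singular values: there are `C₁, C₂ > 0` with
`C₁ (n+1)^{min(-1,-1-γ)} ≤ σ²_{n,k} ≤ C₂ (n+1)^{max(-1,-1-γ)}`. -/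
theorem stmt7 (γ : ℝ) (hγ : -1 < γ) :
    ∃ C1 C2 : ℝ, 0 < C1 ∧ 0 < C2 ∧ ∀ n k : ℕ, k ≤ n →
      C1 * ((n : ℝ) + 1) ^ (min (-1 : ℝ) (-1 - γ)) ≤ sigmaSq γ n k ∧
      sigmaSq γ n k ≤ C2 * ((n : ℝ) + 1) ^ (max (-1 : ℝ) (-1 - γ)) := by
  obtain ⟨c₁, c₂, hc₁, hc₂, H⟩ := gr γ hγ
  obtain ⟨d₁, d₂, hd₁, hd₂, H2⟩ := gr2 γ hγ
  set K : ℝ := 4 * Real.pi * (4 : ℝ) ^ (γ + 1) with hKdef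
  have hK : 0 < K := by
    have := Real.pi_pos
    have := rpow_pos_of_pos (by norm_num : (0:ℝ) < 4) (γ + 1)
    positivity
  have h4γ : (0:ℝ) < (4:ℝ) ^ (-γ) := rpow_pos_of_pos (by norm_num) _
  refine ⟨K * (c₁ * c₁ / d₂) * (4:ℝ) ^ (-γ), K * (c₂ * c₂ / d₁) * (4:ℝ) ^ (-γ),
    by positivity, by positivity, fun n k hk => ?_⟩
  have hkn : (k : ℝ) ≤ (n : ℝ) := Nat.cast_le.mpr hk
  set a : ℝ := (n : ℝ) - (k : ℝ) + 1 with hadef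
  set b : ℝ := (k : ℝ) + 1 with hbdef
  set c : ℝ := (n : ℝ) + 2 with hcdef
  have ha1 : (1:ℝ) ≤ a := by simp [hadef]; linarith
  have hb1 : (1:ℝ) ≤ b := by simp [hbdef]
  have hc2 : (2:ℝ) ≤ c := by simp [hcdef]
  have hab : a + b = c := by simp [hadef, hbdef, hcdef]; ring
  have ha0 : (0:ℝ) < a := by linarith
  have hb0 : (0:ℝ) < b := by linarith
  have hc0 : (0:ℝ) < c := by linarith
  have hv1 : 1 / (2 * c) ≤ a * b / (c * c) := by
    rw [div_le_div_iff₀ (by positivity) (by positivity)]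
    nlinarith [mul_nonneg (sub_nonneg.mpr ha1) (sub_nonneg.mpr hb1)]
  have hv2 : a * b / (c * c) ≤ 1 / 4 := by
    rw [div_le_div_iff₀ (by positivity) (by norm_num)]
    nlinarith [sq_nonneg (a - b)]
  have hn1 : (0:ℝ) < (n : ℝ) + 1 := by positivity
  have haγ : (0:ℝ) < a + γ := by linarith
  have hbγ : (0:ℝ) < b + γ := by linarith
  have hcγ : (0:ℝ) < c + 2*γ := by linarith
  have hGa : 0 < Gamma a := Gamma_pos_of_pos ha0
  have hGb : 0 < Gamma b := Gamma_pos_of_pos hb0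
  have hGc : 0 < Gamma c := Gamma_pos_of_pos hc0
  have hGaγ : 0 < Gamma (a + γ) := Gamma_pos_of_pos haγ
  have hGbγ : 0 < Gamma (b + γ) := Gamma_pos_of_pos hbγ
  have hGcγ : 0 < Gamma (c + 2*γ) := Gamma_pos_of_pos hcγ
  obtain ⟨A1, A2⟩ := H a ha1
  obtain ⟨B1, B2⟩ := H b hb1
  obtain ⟨D1, D2⟩ := H2 c hc2
  -- rewrite sigmaSq
  have hsig : sigmaSq γ n k = K / ((n:ℝ) + 1) *
      ((Gamma (a + γ) * Gamma (b + γ) / Gamma (c + 2*γ)) / (Gamma a * Gamma b / Gamma c)) := by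
    simp only [sigmaSq, realBeta, ← hadef, ← hbdef, ← hKdef]
    rw [show a + γ + (b + γ) = c + 2*γ by rw [← hab]; ring, hab]
  set P : ℝ := a ^ γ * b ^ γ with hPdef
  set Q : ℝ := c ^ (2*γ) with hQdef
  have hP : 0 < P := by positivity
  have hQ : 0 < Q := by positivity
  set N : ℝ := Gamma (a + γ) * Gamma (b + γ) * Gamma c with hNdef
  set D : ℝ := Gamma (c + 2*γ) * (Gamma a * Gamma b) with hDdef
  have hN : 0 < N := by positivity
  have hD : 0 < D := by positivity
  have hRat : (Gamma (a + γ) * Gamma (b + γ) / Gamma (c + 2*γ)) / (Gamma a * Gamma b / Gamma c)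
      = N / D := by
    rw [hNdef, hDdef]; field_simp
  -- bounds on the ratio
  have hRlow : c₁ * c₁ / d₂ * (P / Q) ≤ N / D := by
    rw [div_mul_div_comm, div_le_div_iff₀ (by positivity) hD]
    calc c₁ * c₁ * P * D = (c₁ * (a ^ γ * Gamma a)) * (c₁ * (b ^ γ * Gamma b)) *
          Gamma (c + 2*γ) := by rw [hPdef, hDdef]; ring
      _ ≤ Gamma (a + γ) * Gamma (b + γ) * (d₂ * (Q * Gamma c)) := by
          have := mul_le_mul A1 B1 (by positivity) hGaγ.le
          exact mul_le_mul this D2 hGcγ.le (by positivity)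
      _ = N * (d₂ * Q) := by rw [hNdef]; ring
  have hRhigh : N / D ≤ c₂ * c₂ / d₁ * (P / Q) := by
    rw [div_mul_div_comm, div_le_div_iff₀ hD (by positivity)]
    calc N * (d₁ * Q) = Gamma (a + γ) * Gamma (b + γ) * (d₁ * (Q * Gamma c)) := by
          rw [hNdef]; ring
      _ ≤ (c₂ * (a ^ γ * Gamma a)) * (c₂ * (b ^ γ * Gamma b)) * Gamma (c + 2*γ) := by
          have := mul_le_mul A2 B2 hGbγ.le (by positivity)
          exact mul_le_mul this D1 (by positivity) (by positivity)
      _ = c₂ * c₂ * P * D := by rw [hPdef, hDdef]; ring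
  -- bounds on P / Q
  have hPQ : P / Q = (a * b / (c * c)) ^ γ := by
    rw [hPdef, hQdef, div_rpow (by positivity) (by positivity),
      ← mul_rpow ha0.le hb0.le, mul_rpow hc0.le hc0.le, ← rpow_add hc0]
    ring_nf
  obtain ⟨hU1, hU2⟩ := rpow_between (by positivity : (0:ℝ) < 1 / (2 * c)) hv1 hv2
  have h2cnn : (0:ℝ) ≤ 2 * c := by positivity
  have h2c : (1 / (2 * c) : ℝ) ^ γ = (2 * c) ^ (-γ) := by
    rw [one_div, inv_rpow h2cnn, ← rpow_neg h2cnn]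
  have h14 : ((1:ℝ) / 4) ^ γ = (4:ℝ) ^ (-γ) := by
    rw [one_div, inv_rpow (by norm_num : (0:ℝ) ≤ 4), ← rpow_neg (by norm_num : (0:ℝ) ≤ 4)]
  rw [h2c, h14] at hU1 hU2
  have h2c4 : (4:ℝ) ≤ 2 * c := by linarith
  have h2cn : 2 * c ≤ 4 * ((n:ℝ) + 1) := by rw [hcdef]; linarith [Nat.cast_nonneg (α := ℝ) n]
  have hmul4 : ((4:ℝ) * ((n:ℝ) + 1)) ^ (-γ) = (4:ℝ) ^ (-γ) * ((n:ℝ) + 1) ^ (-γ) :=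
    mul_rpow (by norm_num) hn1.le
  have hn1' : (1:ℝ) ≤ (n:ℝ) + 1 := by linarith [Nat.cast_nonneg (α := ℝ) n]
  have hEndLow : (4:ℝ) ^ (-γ) * ((n:ℝ) + 1) ^ (min 0 (-γ)) ≤
      min ((2 * c) ^ (-γ)) ((4:ℝ) ^ (-γ)) := by
    rcases le_or_gt 0 γ with h | h
    · rw [min_eq_right (by linarith : -γ ≤ (0:ℝ))]
      refine le_min ?_ ?_
      · rw [← hmul4]
        exact rpow_le_rpow_of_nonpos (by positivity) h2cn (by linarith)
      · have h5 : ((n:ℝ) + 1) ^ (-γ) ≤ 1 :=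
          rpow_le_one_of_one_le_of_nonpos hn1' (by linarith)
        calc (4:ℝ) ^ (-γ) * ((n:ℝ) + 1) ^ (-γ) ≤ (4:ℝ) ^ (-γ) * 1 :=
              mul_le_mul_of_nonneg_left h5 h4γ.le
          _ = (4:ℝ) ^ (-γ) := mul_one _
    · rw [min_eq_left (by linarith : (0:ℝ) ≤ -γ), rpow_zero, mul_one]
      exact le_min (rpow_le_rpow (by norm_num) h2c4 (by linarith)) le_rfl
  have hEndHigh : max ((2 * c) ^ (-γ)) ((4:ℝ) ^ (-γ)) ≤
      (4:ℝ) ^ (-γ) * ((n:ℝ) + 1) ^ (max 0 (-γ)) := by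
    rcases le_or_gt 0 γ with h | h
    · rw [max_eq_left (by linarith : -γ ≤ (0:ℝ)), rpow_zero, mul_one]
      exact max_le (rpow_le_rpow_of_nonpos (by norm_num) h2c4 (by linarith)) le_rfl
    · rw [max_eq_right (by linarith : (0:ℝ) ≤ -γ)]
      have h1n : (1:ℝ) ≤ ((n:ℝ) + 1) ^ (-γ) := by
        have h6 := rpow_le_rpow_of_exponent_le hn1' (by linarith : (0:ℝ) ≤ -γ)
        rwa [rpow_zero] at h6
      refine max_le ?_ (le_mul_of_one_le_right h4γ.le h1n)
      rw [← hmul4]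
      exact rpow_le_rpow h2cnn h2cn (by linarith)
  have hPQlow : (4:ℝ) ^ (-γ) * ((n:ℝ) + 1) ^ (min 0 (-γ)) ≤ P / Q := by
    rw [hPQ]; exact hEndLow.trans hU1
  have hPQhigh : P / Q ≤ (4:ℝ) ^ (-γ) * ((n:ℝ) + 1) ^ (max 0 (-γ)) := by
    rw [hPQ]; exact hU2.trans hEndHigh
  have hmin : min (-1:ℝ) (-1 - γ) = -1 + min 0 (-γ) := by
    rcases le_total (0:ℝ) γ with h | h
    · rw [min_eq_right (by linarith : -1 - γ ≤ (-1:ℝ)), min_eq_right (by linarith : -γ ≤ (0:ℝ))]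
      ring
    · rw [min_eq_left (by linarith : (-1:ℝ) ≤ -1 - γ), min_eq_left (by linarith : (0:ℝ) ≤ -γ)]
      ring
  have hmax : max (-1:ℝ) (-1 - γ) = -1 + max 0 (-γ) := by
    rcases le_total (0:ℝ) γ with h | h
    · rw [max_eq_left (by linarith : -1 - γ ≤ (-1:ℝ)), max_eq_left (by linarith : -γ ≤ (0:ℝ))]
      ring
    · rw [max_eq_right (by linarith : (-1:ℝ) ≤ -1 - γ), max_eq_right (by linarith : (0:ℝ) ≤ -γ)]
      ring
  have hsplitmin : ((n:ℝ) + 1) ^ (min (-1:ℝ) (-1 - γ)) =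
      ((n:ℝ) + 1)⁻¹ * ((n:ℝ) + 1) ^ (min 0 (-γ)) := by
    rw [hmin, rpow_add hn1, rpow_neg_one]
  have hsplitmax : ((n:ℝ) + 1) ^ (max (-1:ℝ) (-1 - γ)) =
      ((n:ℝ) + 1)⁻¹ * ((n:ℝ) + 1) ^ (max 0 (-γ)) := by
    rw [hmax, rpow_add hn1, rpow_neg_one]
  rw [hsig, hRat, hsplitmin, hsplitmax]
  constructor
  · calc K * (c₁ * c₁ / d₂) * (4:ℝ) ^ (-γ) * (((n:ℝ) + 1)⁻¹ * ((n:ℝ) + 1) ^ (min 0 (-γ)))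
        = (K * ((n:ℝ) + 1)⁻¹) * ((c₁ * c₁ / d₂) *
            ((4:ℝ) ^ (-γ) * ((n:ℝ) + 1) ^ (min 0 (-γ)))) := by ring
      _ ≤ (K * ((n:ℝ) + 1)⁻¹) * ((c₁ * c₁ / d₂) * (P / Q)) := by
          apply mul_le_mul_of_nonneg_left (mul_le_mul_of_nonneg_left hPQlow (by positivity))
            (by positivity)
      _ ≤ (K * ((n:ℝ) + 1)⁻¹) * (N / D) := by
          apply mul_le_mul_of_nonneg_left hRlow (by positivity)
      _ = K / ((n:ℝ) + 1) * (N / D) := by rw [div_eq_mul_inv K]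
  · calc K / ((n:ℝ) + 1) * (N / D)
        = (K * ((n:ℝ) + 1)⁻¹) * (N / D) := by rw [div_eq_mul_inv K]
      _ ≤ (K * ((n:ℝ) + 1)⁻¹) * (c₂ * c₂ / d₁ * (P / Q)) := by
          apply mul_le_mul_of_nonneg_left hRhigh (by positivity)
      _ ≤ (K * ((n:ℝ) + 1)⁻¹) * (c₂ * c₂ / d₁ *
            ((4:ℝ) ^ (-γ) * ((n:ℝ) + 1) ^ (max 0 (-γ)))) := by
          apply mul_le_mul_of_nonneg_left (mul_le_mul_of_nonneg_left hPQhigh (by positivity))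
            (by positivity)
      _ = K * (c₂ * c₂ / d₁) * (4:ℝ) ^ (-γ) *
            (((n:ℝ) + 1)⁻¹ * ((n:ℝ) + 1) ^ (max 0 (-γ))) := by ring
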